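/- arXiv:1701.01915 — 2 statements merged into one kernel-verified Lean document; each statement's English description precedes it below -/
import Mathlib

section
/- Let Σ be a finite set of primes, a₁,…,a_k,b₁,…,b_k integers with a_i ≠ 0, gcd(a_i,b_i)=1 and a_i b_j − a_j b_i ≠ 0 for i ≠ j, and let M = max{|a₁|,…,|a_k|,|b₁|,…,|b_k|}. Then for all x ≥ z ≥ 2, the set Ω(x,z) has at most kM(x+1)/(z−1) + k√(Mx+M) elements n such that L_i(n) fails to be Σ-square-free for some i ∈ {1,…,k}. -/
/-- An integer is a `Σ`-unit if all its prime divisors belong to `Σ`. -/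
def IsSigmaUnit (S : Finset ℕ) (n : ℤ) : Prop :=
  ∀ p : ℕ, p.Prime → (p : ℤ) ∣ n → p ∈ S

/-- An integer is `Σ`-square-free if it is a product of a `Σ`-unit and a square-free integer. -/
def IsSigmaSquarefree (S : Finset ℕ) (n : ℤ) : Prop :=
  ∃ u v : ℤ, IsSigmaUnit S u ∧ Squarefree v ∧ n = u * v

/-- An integer is composite if it is a product of two integers both `> 1`. -/
def IsComposite (n : ℤ) : Prop :=
  ∃ a b : ℤ, 1 < a ∧ 1 < b ∧ n = a * b

open Classical in
/-- `P_Σ(z) = ∏_{p < z, p ∉ Σ} p`, the product of primes below `z` not in `Σ`. -/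
noncomputable def sievePSigma (S : Finset ℕ) (z : ℝ) : ℕ :=
  ∏ p ∈ Finset.filter (fun p : ℕ => Nat.Prime p ∧ (p : ℝ) < z ∧ p ∉ S)
      (Finset.range (Nat.ceil z + 1)), p

/-- `Ω(x,z)`: the set of positive integers `n ≤ x` such that the product
`L₁(n)⋯L_k(n)` of the linear forms `L_i(n) = a_i n + b_i` is coprime to `P_Σ(z)`. -/
noncomputable def sieveOmega {k : ℕ} (S : Finset ℕ) (a b : Fin k → ℤ) (x z : ℝ) : Set ℕ :=
  {n : ℕ | 1 ≤ n ∧ (n : ℝ) ≤ x ∧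
    Int.gcd (∏ i, (a i * n + b i)) (sievePSigma S z) = 1}

/-- `Ω₁(x,z)`: the subset of `Ω(x,z)` of those `n` for which each `L_i(n)` is a
`Σ`-square-free composite number. -/
noncomputable def sieveOmega1 {k : ℕ} (S : Finset ℕ) (a b : Fin k → ℤ) (x z : ℝ) : Set ℕ :=
  {n ∈ sieveOmega S a b x z |
    ∀ i, IsSigmaSquarefree S (a i * n + b i) ∧ IsComposite (a i * n + b i)}

/-- The non-degeneracy and `Σ`-unit hypotheses on the linear forms `L_i(n) = a_i n + b_i`:
`a_i ≠ 0`, `gcd(a_i, b_i) = 1`, `a_i b_j - a_j b_i ≠ 0` for `i ≠ j`, and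
`(2k)!·∏_i a_i·∏_{i<j} (a_i b_j - a_j b_i)` is a `Σ`-unit. -/
def SieveHypotheses {k : ℕ} (S : Finset ℕ) (a b : Fin k → ℤ) : Prop :=
  (∀ i, a i ≠ 0) ∧
  (∀ i, Int.gcd (a i) (b i) = 1) ∧
  (∀ i j, i ≠ j → a i * b j - a j * b i ≠ 0) ∧
  IsSigmaUnit S
    (((2 * k).factorial : ℤ) * (∏ i, a i) *
      ∏ q ∈ Finset.univ.filter (fun q : Fin k × Fin k => q.1 < q.2),
        (a q.1 * b q.2 - a q.2 * b q.1))


lemma nat_decomp (S : Finset ℕ) : ∀ (N : ℕ), N ≠ 0 →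
    (∀ p : ℕ, p.Prime → p ∉ S → ¬ p ^ 2 ∣ N) →
    ∃ u v : ℕ, u ≠ 0 ∧ (∀ p : ℕ, p.Prime → p ∣ u → p ∈ S) ∧ Squarefree v ∧ N = u * v := by
  classical
  induction S using Finset.induction_on with
  | empty =>
    intro N hN h
    refine ⟨1, N, one_ne_zero, ?_, ?_, (one_mul N).symm⟩
    · intro p hp hpu
      exact absurd (Nat.eq_one_of_dvd_one hpu ▸ hp) Nat.not_prime_one
    · rw [Nat.squarefree_iff_prime_squarefree]
      intro p hp hpd
      exact h p hp (Finset.notMem_empty p) (by rwa [pow_two])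
  | insert q S' hq ih =>
    intro N hN h
    have hN' : ordCompl[q] N ≠ 0 := (Nat.ordCompl_pos q hN).ne'
    have hyp : ∀ p : ℕ, p.Prime → p ∉ S' → ¬ p ^ 2 ∣ ordCompl[q] N := by
      intro p hp hpS hpd
      by_cases hpq : p = q
      · subst hpq
        exact Nat.not_dvd_ordCompl hp hN (dvd_trans (dvd_pow_self p two_ne_zero) hpd)
      · exact h p hp (by simp [hpS, hpq]) (hpd.trans (Nat.ordCompl_dvd N q))
    obtain ⟨u, v, hu0, huS, hv, huv⟩ := ih (ordCompl[q] N) hN' hyp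
    refine ⟨q ^ N.factorization q * u, v, ?_, ?_, hv, ?_⟩
    · exact Nat.mul_ne_zero (fun h0 => hN (zero_dvd_iff.mp (h0 ▸ Nat.ordProj_dvd N q))) hu0
    · intro p hp hpd
      rcases (Nat.Prime.dvd_mul hp).mp hpd with h1 | h2
      · have := Nat.Prime.dvd_of_dvd_pow hp h1
        by_cases hqp : q.Prime
        · rw [(Nat.prime_dvd_prime_iff_eq hp hqp).mp this]
          exact Finset.mem_insert_self q S'
        · simp [Nat.factorization_eq_zero_of_not_prime N hqp] at h1
          exact absurd (h1 ▸ hp) Nat.not_prime_one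
      · exact Finset.mem_insert_of_mem (huS p hp h2)
    · rw [mul_assoc, ← huv, Nat.ordProj_mul_ordCompl_eq_self]

lemma int_decomp (S : Finset ℕ) (L : ℤ) (hL : L ≠ 0)
    (h : ∀ p : ℕ, p.Prime → p ∉ S → ¬ ((p : ℤ)) ^ 2 ∣ L) : IsSigmaSquarefree S L := by
  have hyp : ∀ p : ℕ, p.Prime → p ∉ S → ¬ p ^ 2 ∣ L.natAbs := by
    intro p hp hpS hpd
    refine h p hp hpS ?_
    have : ((p ^ 2 : ℕ) : ℤ) ∣ (L.natAbs : ℤ) := Int.natCast_dvd_natCast.mpr hpd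
    rw [Int.natCast_natAbs] at this
    push_cast at this
    exact (dvd_abs _ _).mp this
  obtain ⟨u, v, hu0, huS, hv, huv⟩ := nat_decomp S L.natAbs (Int.natAbs_ne_zero.mpr hL) hyp
  refine ⟨L.sign * u, (v : ℤ), ?_, Int.squarefree_natCast.mpr hv, ?_⟩
  · intro p hp hpd
    refine huS p hp ?_
    have hs : L.sign = 1 ∨ L.sign = -1 := by
      rcases lt_trichotomy L 0 with h' | h' | h'
      · exact Or.inr (Int.sign_eq_neg_one_iff_neg.mpr h')
      · exact absurd h' hL
      · exact Or.inl (Int.sign_eq_one_iff_pos.mpr h')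
    have : (p : ℤ) ∣ (u : ℤ) := by
      rcases hs with hs | hs <;> rw [hs] at hpd
      · simpa using hpd
      · simpa using dvd_neg.mp (by simpa using hpd)
    exact_mod_cast this
  · rw [mul_assoc, ← Nat.cast_mul, ← huv, Int.sign_mul_natAbs]


lemma sum_inv_sq_le (N : ℕ) (hN : 2 ≤ N) (B : ℕ) :
    ∑ m ∈ Finset.Icc N B, (1 : ℝ) / (m : ℝ) ^ 2 ≤ 1 / ((N : ℝ) - 1) := by
  have hN1 : (1 : ℝ) ≤ (N : ℝ) - 1 := by
    have : (2 : ℝ) ≤ (N : ℝ) := by exact_mod_cast hN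
    linarith
  have key : ∀ B : ℕ, ∑ m ∈ Finset.Icc N B, (1 : ℝ) / (m : ℝ) ^ 2
      ≤ 1 / ((N : ℝ) - 1) - 1 / ((max B (N - 1) : ℕ) : ℝ) := by
    intro B
    induction B with
    | zero =>
      rw [Finset.Icc_eq_empty (by omega)]
      have : max 0 (N - 1) = N - 1 := by omega
      rw [Finset.sum_empty, this]
      have : ((N - 1 : ℕ) : ℝ) = (N : ℝ) - 1 := by
        push_cast [Nat.cast_sub (by omega : 1 ≤ N)]; ring
      rw [this]
      simp
    | succ B ih =>
      by_cases hB : N ≤ B + 1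
      · rw [Finset.sum_Icc_succ_top hB]
        have hB1 : N - 1 ≤ B := by omega
        have hmax1 : max B (N - 1) = B := by omega
        have hmax2 : max (B + 1) (N - 1) = B + 1 := by omega
        rw [hmax1] at ih
        rw [hmax2]
        have hBpos : (1 : ℝ) ≤ (B : ℝ) := by
          have : 1 ≤ B := by omega
          exact_mod_cast this
        have step : (1 : ℝ) / ((B : ℝ) + 1) ^ 2 ≤ 1 / (B : ℝ) - 1 / ((B : ℝ) + 1) := by
          rw [div_sub_div _ _ (by linarith) (by linarith)]
          rw [div_le_div_iff₀ (by positivity) (by positivity)]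
          ring_nf
          nlinarith
        push_cast
        push_cast at ih
        linarith
      · rw [Finset.Icc_eq_empty (by omega)]
        have : max (B + 1) (N - 1) = N - 1 := by omega
        rw [Finset.sum_empty, this]
        have : ((N - 1 : ℕ) : ℝ) = (N : ℝ) - 1 := by
          push_cast [Nat.cast_sub (by omega : 1 ≤ N)]; ring
        rw [this]
        simp
  refine (key B).trans ?_
  have : 0 ≤ 1 / ((max B (N - 1) : ℕ) : ℝ) := by positivity
  linarith

lemma card_dvd_linear (X : ℕ) (A B : ℤ) (q : ℕ) (hq : 1 ≤ q)
    (hcop : IsCoprime (q : ℤ) A) :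
    ((Finset.Icc 1 X).filter (fun n : ℕ => (q : ℤ) ∣ A * n + B)).card ≤ X / q + 1 := by
  classical
  have key : ∀ n ∈ (Finset.Icc 1 X).filter (fun n : ℕ => (q : ℤ) ∣ A * n + B),
      ∀ m ∈ (Finset.Icc 1 X).filter (fun n : ℕ => (q : ℤ) ∣ A * n + B),
      n < m → (n - 1) / q < (m - 1) / q := by
    intro n hn m hm hnm
    simp only [Finset.mem_filter, Finset.mem_Icc] at hn hm
    have hd : (q : ℤ) ∣ A * ((m : ℤ) - n) := by
      have := dvd_sub hm.2 hn.2
      rw [show A * ((m : ℤ) - n) = A * m + B - (A * n + B) by ring]; exact this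
    have hd2 : (q : ℤ) ∣ ((m : ℤ) - n) := hcop.dvd_of_dvd_mul_left hd
    have hd3 : q ∣ m - n := by
      have : ((m - n : ℕ) : ℤ) = (m : ℤ) - n := by
        push_cast [Nat.cast_sub hnm.le]; ring
      exact_mod_cast this ▸ hd2
    have hge : n + q ≤ m := by
      have := Nat.le_of_dvd (by omega) hd3
      omega
    calc (n - 1) / q < (n - 1) / q + 1 := Nat.lt_succ_self _
      _ = (n - 1 + q) / q := (Nat.add_div_right _ (by omega)).symm
      _ ≤ (m - 1) / q := Nat.div_le_div_right (by omega)
  apply le_trans (Finset.card_le_card_of_injOn (fun n => (n - 1) / q) ?_ ?_)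
  · rw [Finset.card_range]
  · intro n hn
    simp only [Finset.coe_filter, Finset.mem_filter, Finset.mem_Icc, Set.mem_setOf_eq] at hn
    simp only [Finset.coe_range, Set.mem_Iio, Finset.mem_range]
    have : (n - 1) / q ≤ X / q := Nat.div_le_div_right (by omega)
    omega
  · intro n hn m hm hfe
    rcases lt_trichotomy n m with h | h | h
    · exact absurd hfe (Nat.ne_of_lt (key n hn m hm h))
    · exact h
    · exact absurd hfe.symm (Nat.ne_of_lt (key m hm n hn h))


/-- Sieving away non-squarefree values: with `M = max{|a₁|,…,|a_k|,|b₁|,…,|b_k|}`, for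
`x ≥ z ≥ 2` the set `Ω(x,z)` has at most `kM(x+1)/(z−1) + k√(Mx+M)` elements `n` such that
some `L_i(n)` is not `Σ`-square-free. -/
theorem sieve_nonsquarefree_count (k : ℕ) (hk : 0 < k) (S : Finset ℕ)
    (hS : ∀ p ∈ S, p.Prime) (a b : Fin k → ℤ)
    (ha : ∀ i, a i ≠ 0) (hab : ∀ i, Int.gcd (a i) (b i) = 1)
    (hcross : ∀ i j, i ≠ j → a i * b j - a j * b i ≠ 0)
    (M : ℕ) (hM : M = Finset.univ.sup (fun i => max (a i).natAbs (b i).natAbs))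
    (x z : ℝ) (hz : 2 ≤ z) (hx : z ≤ x) :
    (Nat.card {n ∈ sieveOmega S a b x z |
        ∃ i, ¬IsSigmaSquarefree S (a i * n + b i)} : ℝ) ≤
      k * M * (x + 1) / (z - 1) + k * Real.sqrt (M * x + M) := by
  classical
  set X : ℕ := Nat.floor x with hX
  set N : ℕ := Nat.ceil z with hNdef
  set Y : ℝ := (M : ℝ) * x + (M : ℝ) with hY
  set B : ℕ := Nat.floor (Real.sqrt Y) with hB
  -- basic bounds
  have hx0 : (0 : ℝ) ≤ x := by linarith
  have hM1 : 1 ≤ M := by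
    have h1 : max (a ⟨0, hk⟩).natAbs (b ⟨0, hk⟩).natAbs ≤ M :=
      hM ▸ Finset.le_sup (f := fun i => max (a i).natAbs (b i).natAbs) (Finset.mem_univ _)
    have h2 : 1 ≤ (a ⟨0, hk⟩).natAbs := Int.natAbs_pos.mpr (ha _)
    omega
  have hiM : ∀ i : Fin k, max (a i).natAbs (b i).natAbs ≤ M := fun i =>
    hM ▸ Finset.le_sup (f := fun i => max (a i).natAbs (b i).natAbs) (Finset.mem_univ _)
  have haM : ∀ i, (a i).natAbs ≤ M := fun i => le_trans (le_max_left _ _) (hiM i)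
  have hbM : ∀ i, (b i).natAbs ≤ M := fun i => le_trans (le_max_right _ _) (hiM i)
  have hN2 : 2 ≤ N := by
    have := Nat.le_ceil z
    have h2 : (2 : ℝ) ≤ (N : ℝ) := le_trans hz this
    exact_mod_cast h2
  have hY3 : (3 : ℝ) ≤ Y := by
    have hM1' : (1 : ℝ) ≤ (M : ℝ) := by exact_mod_cast hM1
    have hx2 : (2 : ℝ) ≤ x := le_trans hz hx
    rw [hY]; nlinarith
  have hsqrt1 : (1 : ℝ) ≤ Real.sqrt Y := by
    rw [show (1:ℝ) = Real.sqrt 1 by simp]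
    exact Real.sqrt_le_sqrt (by linarith)
  have hB1 : 1 ≤ B := Nat.le_floor (by exact_mod_cast hsqrt1)
  -- the finsets
  set P : Finset ℕ := (Finset.Icc N B).filter Nat.Prime with hP
  set A : Fin k → ℕ → Finset ℕ := fun i p =>
    (Finset.Icc 1 X).filter (fun n : ℕ => ((p : ℤ)) ^ 2 ∣ a i * n + b i) with hA
  set Z : Fin k → Finset ℕ := fun i =>
    (Finset.Icc 1 X).filter (fun n : ℕ => a i * n + b i = 0) with hZ
  set F : Finset ℕ := Finset.univ.biUnion (fun i : Fin k => Z i ∪ P.biUnion (A i)) with hF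
  -- step 1: the bad set is contained in F
  have hsub : {n ∈ sieveOmega S a b x z | ∃ i, ¬IsSigmaSquarefree S (a i * n + b i)}
      ⊆ (F : Set ℕ) := by
    rintro n ⟨⟨hn1, hnx, hgcd⟩, i, hbad⟩
    have hnX : n ∈ Finset.Icc 1 X := by
      rw [Finset.mem_Icc]
      exact ⟨hn1, Nat.le_floor hnx⟩
    rw [Finset.mem_coe, hF, Finset.mem_biUnion]
    refine ⟨i, Finset.mem_univ i, ?_⟩
    rw [Finset.mem_union]
    by_cases hL0 : a i * n + b i = 0
    · left
      rw [hZ]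
      exact Finset.mem_filter.mpr ⟨hnX, hL0⟩
    · right
      -- there is a prime p ∉ S with p² ∣ L
      have hex : ∃ p : ℕ, p.Prime ∧ p ∉ S ∧ ((p : ℤ)) ^ 2 ∣ a i * n + b i := by
        by_contra hcon
        push_neg at hcon
        exact hbad (int_decomp S _ hL0 (fun p hp hpS => hcon p hp hpS))
      obtain ⟨p, hp, hpS, hpd⟩ := hex
      have hpL : (p : ℤ) ∣ a i * n + b i := dvd_trans (dvd_pow_self _ two_ne_zero) hpd
      -- p ≥ z, else contradiction with the gcd condition
      have hzp : z ≤ (p : ℝ) := by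
        by_contra hcon
        push_neg at hcon
        have hmem : p ∈ Finset.filter (fun p : ℕ => Nat.Prime p ∧ (p : ℝ) < z ∧ p ∉ S)
            (Finset.range (Nat.ceil z + 1)) := by
          refine Finset.mem_filter.mpr ⟨?_, hp, hcon, hpS⟩
          rw [Finset.mem_range]
          have : (p : ℝ) < (N : ℝ) + 1 := lt_of_lt_of_le hcon (by
            have := Nat.le_ceil z; push_cast; linarith)
          have : p < N + 1 := by exact_mod_cast this
          omega
        have hdP : p ∣ sievePSigma S z := Finset.dvd_prod_of_mem _ hmem
        have hdprod : (p : ℤ) ∣ ∏ j, (a j * n + b j) :=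
          dvd_trans hpL (Finset.dvd_prod_of_mem _ (Finset.mem_univ i))
        have h1 : p ∣ (∏ j, (a j * (n : ℤ) + b j)).natAbs := by
          have := Int.natAbs_dvd_natAbs.mpr hdprod
          simpa using this
        have h2 : p ∣ ((sievePSigma S z : ℤ)).natAbs := by simpa using hdP
        have : p ∣ Int.gcd (∏ j, (a j * (n : ℤ) + b j)) (sievePSigma S z) :=
          Nat.dvd_gcd h1 h2
        rw [hgcd] at this
        exact hp.ne_one (Nat.dvd_one.mp this)
      have hNp : N ≤ p := Nat.ceil_le.mpr hzp
      have hpB : p ≤ B := by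
        apply Nat.le_floor
        rw [show ((p : ℕ) : ℝ) = ((p : ℝ)) from rfl,
          Real.le_sqrt (by positivity : (0:ℝ) ≤ (p:ℝ)) (by linarith : (0:ℝ) ≤ Y)]
        have hple : ((p : ℤ)) ^ 2 ≤ |a i * (n : ℤ) + b i| :=
          Int.le_of_dvd (abs_pos.mpr hL0) ((dvd_abs _ _).mpr hpd)
        have h1 : |a i| ≤ (M : ℤ) := by
          rw [Int.abs_eq_natAbs]; exact_mod_cast haM i
        have h2 : |b i| ≤ (M : ℤ) := by
          rw [Int.abs_eq_natAbs]; exact_mod_cast hbM i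
        have hn0 : (0 : ℤ) ≤ (n : ℤ) := Int.natCast_nonneg n
        have habs : |a i * (n : ℤ) + b i| ≤ (M : ℤ) * n + M := by
          calc |a i * (n : ℤ) + b i| ≤ |a i * (n : ℤ)| + |b i| := abs_add_le _ _
            _ = |a i| * n + |b i| := by
                rw [abs_mul, abs_of_nonneg hn0]
            _ ≤ (M : ℤ) * n + M := by nlinarith [abs_nonneg (a i), abs_nonneg (b i)]
        have hR : ((p : ℝ)) ^ 2 ≤ (M : ℝ) * (n : ℝ) + M := by
          exact_mod_cast hple.trans habs
        have hM0 : (0 : ℝ) ≤ (M : ℝ) := Nat.cast_nonneg M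
        have hnx' : (M : ℝ) * (n : ℝ) + M ≤ Y := by
          rw [hY]; nlinarith
        linarith
      refine Finset.mem_biUnion.mpr ⟨p, ?_, ?_⟩
      · exact Finset.mem_filter.mpr ⟨Finset.mem_Icc.mpr ⟨hNp, hpB⟩, hp⟩
      · exact Finset.mem_filter.mpr ⟨hnX, hpd⟩
  -- step 2: cardinality bounds
  have hcard1 : Nat.card {n ∈ sieveOmega S a b x z |
      ∃ i, ¬IsSigmaSquarefree S (a i * n + b i)} ≤ F.card := by
    have h2 : Nat.card (F : Set ℕ) = F.card := by
      rw [Nat.card_coe_set_eq, Set.ncard_coe_finset]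
    exact le_trans (Nat.card_mono F.finite_toSet hsub) (le_of_eq h2)
  have hZcard : ∀ i, (Z i).card ≤ 1 := by
    intro i
    refine Finset.card_le_one.mpr ?_
    intro m hm n hn
    simp only [hZ, Finset.mem_filter] at hm hn
    have he : a i * (m : ℤ) = a i * (n : ℤ) := by linarith [hm.2, hn.2]
    exact_mod_cast mul_left_cancel₀ (ha i) he
  have hAcard : ∀ i, ∀ p ∈ P, (A i p).card ≤ X / p ^ 2 + 1 := by
    intro i p hpP
    simp only [hP, Finset.mem_filter] at hpP
    obtain ⟨hpIcc, hp⟩ := hpP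
    by_cases hpa : (p : ℤ) ∣ a i
    · have hempty : A i p = ∅ := by
        simp only [hA]
        refine Finset.filter_eq_empty_iff.mpr ?_
        intro n hn hd
        have hpL : (p : ℤ) ∣ a i * n + b i := dvd_trans (dvd_pow_self _ two_ne_zero) hd
        have hpb : (p : ℤ) ∣ b i := (dvd_add_right (hpa.mul_right _)).mp hpL
        have hd1 : p ∣ (a i).natAbs := by
          simpa using Int.natAbs_dvd_natAbs.mpr hpa
        have hd2 : p ∣ (b i).natAbs := by
          simpa using Int.natAbs_dvd_natAbs.mpr hpb
        have : p ∣ Int.gcd (a i) (b i) := Nat.dvd_gcd hd1 hd2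
        rw [hab i] at this
        exact hp.ne_one (Nat.dvd_one.mp this)
      rw [hempty]
      simp
    · have hnd : ¬ p ∣ (a i).natAbs := by
        intro hd
        exact hpa (by simpa using Int.natAbs_dvd_natAbs.mp (by simpa using hd))
      have hcop1 : IsCoprime ((p : ℤ)) (a i) := by
        rw [Int.isCoprime_iff_gcd_eq_one, Int.gcd]
        simp only [Int.natAbs_natCast]
        exact (Nat.Prime.coprime_iff_not_dvd hp).mpr hnd
      have hcop : IsCoprime (((p ^ 2 : ℕ) : ℤ)) (a i) := by
        push_cast
        exact hcop1.pow_left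
      have := card_dvd_linear X (a i) (b i) (p ^ 2) (Nat.one_le_pow 2 p hp.pos) hcop
      simp only [show ((p ^ 2 : ℕ) : ℤ) = ((p : ℤ)) ^ 2 from by push_cast; ring] at this
      exact this
  -- step 3: total nat-card bound
  set C : ℕ := 1 + ∑ p ∈ P, (X / p ^ 2 + 1) with hC
  have hFtot : F.card ≤ k * C := by
    calc F.card ≤ ∑ i : Fin k, (Z i ∪ P.biUnion (A i)).card := Finset.card_biUnion_le
      _ ≤ ∑ _i : Fin k, C := by
          refine Finset.sum_le_sum ?_
          intro i _
          calc (Z i ∪ P.biUnion (A i)).card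
              ≤ (Z i).card + (P.biUnion (A i)).card := Finset.card_union_le _ _
            _ ≤ 1 + ∑ p ∈ P, (A i p).card := by
                have h1 := hZcard i
                have h2 : (P.biUnion (A i)).card ≤ ∑ p ∈ P, (A i p).card :=
                  Finset.card_biUnion_le
                omega
            _ ≤ C := by
                rw [hC]
                have : ∑ p ∈ P, (A i p).card ≤ ∑ p ∈ P, (X / p ^ 2 + 1) :=
                  Finset.sum_le_sum (fun p hp => hAcard i p hp)
                omega
      _ = k * C := by
          rw [Finset.sum_const, Finset.card_univ, Fintype.card_fin, smul_eq_mul]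
  -- step 4: real estimates
  have hz1 : (0 : ℝ) < z - 1 := by linarith
  have hM0 : (0 : ℝ) ≤ (M : ℝ) := Nat.cast_nonneg M
  have hM1' : (1 : ℝ) ≤ (M : ℝ) := by exact_mod_cast hM1
  -- bound on 1 + P.card
  have hPB : 1 + P.card ≤ B := by
    have hsub2 : P ⊆ Finset.Icc 2 B := by
      intro p hp
      simp only [hP, Finset.mem_filter, Finset.mem_Icc] at hp ⊢
      exact ⟨by omega, hp.1.2⟩
    have := Finset.card_le_card hsub2
    rw [Nat.card_Icc] at this
    omega
  have hPBR : (1 : ℝ) + (P.card : ℝ) ≤ Real.sqrt Y := by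
    have h1 : ((1 + P.card : ℕ) : ℝ) ≤ (B : ℝ) := by exact_mod_cast hPB
    have h2 : (B : ℝ) ≤ Real.sqrt Y := Nat.floor_le (Real.sqrt_nonneg _)
    push_cast at h1
    linarith
  -- bound on the sum
  have hsum : (((∑ p ∈ P, X / p ^ 2 : ℕ)) : ℝ) ≤ (M : ℝ) * (x + 1) / (z - 1) := by
    rw [Nat.cast_sum]
    have step1 : ∀ p ∈ P, ((X / p ^ 2 : ℕ) : ℝ) ≤ x * ((1 : ℝ) / (p : ℝ) ^ 2) := by
      intro p hp
      simp only [hP, Finset.mem_filter, Finset.mem_Icc] at hp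
      have hp2 : (0 : ℝ) < (p : ℝ) ^ 2 := by
        have : 2 ≤ p := by omega
        positivity
      calc ((X / p ^ 2 : ℕ) : ℝ) ≤ (X : ℝ) / ((p ^ 2 : ℕ) : ℝ) := Nat.cast_div_le
        _ = (X : ℝ) / (p : ℝ) ^ 2 := by push_cast; ring_nf
        _ ≤ x / (p : ℝ) ^ 2 := by
            gcongr
            exact Nat.floor_le hx0
        _ = x * ((1 : ℝ) / (p : ℝ) ^ 2) := by ring
    calc ∑ p ∈ P, ((X / p ^ 2 : ℕ) : ℝ) ≤ ∑ p ∈ P, x * ((1 : ℝ) / (p : ℝ) ^ 2) :=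
          Finset.sum_le_sum step1
      _ = x * ∑ p ∈ P, (1 : ℝ) / (p : ℝ) ^ 2 := by rw [Finset.mul_sum]
      _ ≤ x * ∑ m ∈ Finset.Icc N B, (1 : ℝ) / (m : ℝ) ^ 2 := by
          apply mul_le_mul_of_nonneg_left ?_ hx0
          apply Finset.sum_le_sum_of_subset_of_nonneg (Finset.filter_subset _ _)
          intro m _ _
          positivity
      _ ≤ x * (1 / ((N : ℝ) - 1)) := by
          apply mul_le_mul_of_nonneg_left (sum_inv_sq_le N hN2 B) hx0
      _ ≤ x * (1 / (z - 1)) := by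
          apply mul_le_mul_of_nonneg_left ?_ hx0
          apply one_div_le_one_div_of_le hz1
          have := Nat.le_ceil z
          have : z ≤ (N : ℝ) := this
          linarith
      _ ≤ (M : ℝ) * (x + 1) / (z - 1) := by
          rw [mul_one_div, div_le_div_iff₀ hz1 hz1]
          nlinarith [mul_le_mul_of_nonneg_right
            (show x ≤ (M : ℝ) * (x + 1) by nlinarith) (le_of_lt hz1)]
  -- final computation
  have hCR : (C : ℝ) ≤ Real.sqrt Y + (M : ℝ) * (x + 1) / (z - 1) := by
    have hexp : (C : ℝ) = 1 + (P.card : ℝ) + ((∑ p ∈ P, X / p ^ 2 : ℕ) : ℝ) := by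
      rw [hC]
      push_cast [Finset.sum_add_distrib]
      simp [Finset.sum_const]
      ring
    rw [hexp]
    linarith
  calc (Nat.card {n ∈ sieveOmega S a b x z |
        ∃ i, ¬IsSigmaSquarefree S (a i * n + b i)} : ℝ)
      ≤ (F.card : ℝ) := by exact_mod_cast hcard1
    _ ≤ (k : ℝ) * (C : ℝ) := by exact_mod_cast hFtot
    _ ≤ (k : ℝ) * (Real.sqrt Y + (M : ℝ) * (x + 1) / (z - 1)) := by
        apply mul_le_mul_of_nonneg_left hCR (Nat.cast_nonneg k)
    _ = k * M * (x + 1) / (z - 1) + k * Real.sqrt (M * x + M) := by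
        rw [hY]; ring
end

section
/- Let f₁,…,f_k be primitive forms of square-free levels with weights κ₁,…,κ_k, let ν₁,…,ν_k be distinct positive integers with a_{f_i}(ν_i) ≠ 0 for all i, and set K = max{ν₁,…,ν_k}. Then there exists a positive real c₀, depending on K and f₁,…,f_k, such that for every positive integer m with m ≡ 0 (mod (2K)!), writing m + ν_i = ν_i m_i for each i, one has c₀|λ_{f_i}(m_i)| ≤ |λ_{f_i}(m+ν_i)| ≤ c₀^{−1}|λ_{f_i}(m_i)| and c₀|λ_{f_i}(m_i)| ≤ |a_{f_i}(m+ν_i)|/m^{(κ_i−1)/2} ≤ c₀^{−1}|λ_{f_i}(m_i)| for i = 1,…,k. -/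
open scoped Real

/-- A primitive form of weight `κ` and square-free level `N`: a holomorphic cusp form for
`Γ₀(N)` with trivial character, which is a normalized Hecke eigenform for all Hecke operators
and all Atkin–Lehner involutions.  We record it via its defining properties: the underlying
cusp form, its (real) Fourier coefficients `a_f(n)`, normalization, the Hecke relations
(multiplicativity and the recurrences at prime powers, including `a_f(p) ≠ 0` for `p ∣ N`,
which holds for newforms of square-free level by Atkin–Lehner theory), and Deligne's bound. -/
structure PrimitiveForm where
  weight : ℕ
  level : ℕ
  weight_pos : 0 < weight
  weight_even : Even weight
  level_squarefree : Squarefree level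
  form : CuspForm (CongruenceSubgroup.Gamma0 level) weight
  coeff : ℕ → ℝ
  coeff_spec : ∀ z : UpperHalfPlane, HasSum
    (fun n : ℕ => (coeff n : ℂ) * Complex.exp (2 * Real.pi * Complex.I * n * (z : ℂ)))
    (form z)
  coeff_one : coeff 1 = 1
  coeff_mult : ∀ m n : ℕ, Nat.Coprime m n → coeff (m * n) = coeff m * coeff n
  coeff_prime_dvd : ∀ p : ℕ, p.Prime → p ∣ level →
    ∀ ℓ : ℕ, coeff (p ^ (ℓ + 1)) = coeff p ^ (ℓ + 1)
  coeff_prime_dvd_ne : ∀ p : ℕ, p.Prime → p ∣ level → coeff p ≠ 0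
  coeff_recurrence : ∀ p : ℕ, p.Prime → ¬p ∣ level → ∀ ℓ : ℕ,
    coeff (p ^ (ℓ + 2)) = coeff p * coeff (p ^ (ℓ + 1)) - (p : ℝ) ^ (weight - 1) * coeff (p ^ ℓ)
  deligne : ∀ p : ℕ, p.Prime → |coeff p| ≤ 2 * (p : ℝ) ^ (((weight : ℝ) - 1) / 2)

/-- The normalized Hecke eigenvalues `λ_f(n) = a_f(n) / n^((κ-1)/2)`. -/
noncomputable def PrimitiveForm.lambda (f : PrimitiveForm) (n : ℕ) : ℝ :=
  f.coeff n / (n : ℝ) ^ (((f.weight : ℝ) - 1) / 2)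

private lemma PrimitiveForm.lambda_mul (f : PrimitiveForm) {a b : ℕ} (h : Nat.Coprime a b) :
    f.lambda (a * b) = f.lambda a * f.lambda b := by
  unfold PrimitiveForm.lambda
  rw [f.coeff_mult a b h, Nat.cast_mul,
    Real.mul_rpow (Nat.cast_nonneg a) (Nat.cast_nonneg b), mul_div_mul_comm]

/-- Chinese remainder normalization: with `K = max{ν₁,…,ν_k}`, there is `c₀ > 0` such that
for every positive `m ≡ 0 (mod (2K)!)`, writing `m + ν_i = ν_i·m_i`, one has
`c₀|λ_{f_i}(m_i)| ≤ |λ_{f_i}(m+ν_i)| ≤ c₀⁻¹|λ_{f_i}(m_i)|` and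
`c₀|λ_{f_i}(m_i)| ≤ |a_{f_i}(m+ν_i)|/m^{(κ_i−1)/2} ≤ c₀⁻¹|λ_{f_i}(m_i)|`. -/
theorem lambda_comparison_crt (k : ℕ) (hk : 0 < k) (f : Fin k → PrimitiveForm)
    (ν : Fin k → ℕ) (hν : ∀ i, 0 < ν i) (hinj : Function.Injective ν)
    (hnz : ∀ i, (f i).coeff (ν i) ≠ 0)
    (K : ℕ) (hK : K = Finset.univ.sup ν) :
    ∃ c₀ : ℝ, 0 < c₀ ∧
      ∀ m : ℕ, 0 < m → (2 * K).factorial ∣ m →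
        ∀ i : Fin k, ∀ mi : ℕ, m + ν i = ν i * mi →
          (c₀ * |(f i).lambda mi| ≤ |(f i).lambda (m + ν i)| ∧
            |(f i).lambda (m + ν i)| ≤ c₀⁻¹ * |(f i).lambda mi|) ∧
          (c₀ * |(f i).lambda mi| ≤
              |(f i).coeff (m + ν i)| / (m : ℝ) ^ ((((f i).weight : ℝ) - 1) / 2) ∧
            |(f i).coeff (m + ν i)| / (m : ℝ) ^ ((((f i).weight : ℝ) - 1) / 2) ≤
              c₀⁻¹ * |(f i).lambda mi|) := by

  classical
  have hne : (Finset.univ : Finset (Fin k)).Nonempty := ⟨⟨0, hk⟩, Finset.mem_univ _⟩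
  set s : Fin k → ℝ := fun i => (((f i).weight : ℝ) - 1) / 2 with hsdef
  have hs0 : ∀ i, 0 ≤ s i := by
    intro i
    have h1 : (1 : ℝ) ≤ ((f i).weight : ℝ) := by exact_mod_cast (f i).weight_pos
    have : (0:ℝ) ≤ ((f i).weight : ℝ) - 1 := by linarith
    simpa [hsdef] using div_nonneg this (by norm_num)
  set L : Fin k → ℝ := fun i => |(f i).lambda (ν i)| with hLdef
  have hLpos : ∀ i, 0 < L i := by
    intro i
    have hνpos : (0:ℝ) < ((ν i : ℕ) : ℝ) := by exact_mod_cast hν i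
    exact abs_pos.mpr (div_ne_zero (hnz i) (ne_of_gt (Real.rpow_pos_of_pos hνpos _)))
  set W : Fin k → ℝ := fun i => (2:ℝ) ^ (s i) with hWdef
  have hWpos : ∀ i, 0 < W i := fun i => Real.rpow_pos_of_pos two_pos _
  have hW1 : ∀ i, 1 ≤ W i := by
    intro i
    have := Real.rpow_le_rpow zero_le_one one_le_two (hs0 i)
    simpa [Real.one_rpow] using this
  set c₀ : ℝ := Finset.univ.inf' hne (fun i => min (L i) ((L i * W i)⁻¹)) with hc₀def
  have hc₀pos : 0 < c₀ := by
    rw [hc₀def, Finset.lt_inf'_iff]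
    intro i _
    exact lt_min (hLpos i) (inv_pos.mpr (mul_pos (hLpos i) (hWpos i)))
  have hc₀L : ∀ i, c₀ ≤ L i := fun i =>
    le_trans (Finset.inf'_le _ (Finset.mem_univ i)) (min_le_left _ _)
  have hc₀LW : ∀ i, L i * W i ≤ c₀⁻¹ := by
    intro i
    have h1 : c₀ ≤ (L i * W i)⁻¹ :=
      le_trans (Finset.inf'_le _ (Finset.mem_univ i)) (min_le_right _ _)
    have h2 : ((L i * W i)⁻¹)⁻¹ ≤ c₀⁻¹ :=
      inv_anti₀ hc₀pos h1
    rwa [inv_inv] at h2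
  have hc₀invL : ∀ i, L i ≤ c₀⁻¹ := by
    intro i
    refine le_trans ?_ (hc₀LW i)
    nlinarith [hLpos i, hW1 i]
  refine ⟨c₀, hc₀pos, ?_⟩
  intro m hm hdvd i mi hmi
  have hνK : ν i ≤ K := hK ▸ Finset.le_sup (Finset.mem_univ i)
  have hν2m : ν i * ν i ∣ m := by
    have h1 : ν i ∣ K.factorial := Nat.dvd_factorial (hν i) hνK
    have h2 : K.factorial * K.factorial ∣ (2 * K).factorial := by
      rw [two_mul]; exact Nat.factorial_mul_factorial_dvd_factorial_add K K
    exact (mul_dvd_mul h1 h1).trans (h2.trans hdvd)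
  have hνm : ν i ∣ m := (dvd_mul_right _ _).trans hν2m
  have hmi_eq : mi = m / ν i + 1 := by
    have h1 : ν i * (m / ν i + 1) = m + ν i := by
      rw [mul_add, mul_one, Nat.mul_div_cancel' hνm]
    exact (Nat.eq_of_mul_eq_mul_left (hν i) (by rw [h1, hmi])).symm
  have hcop : Nat.Coprime (ν i) mi := by
    obtain ⟨t, ht⟩ : ν i ∣ m / ν i := by
      obtain ⟨t, ht⟩ := hν2m
      exact ⟨t, by rw [ht, mul_assoc, Nat.mul_div_cancel_left _ (hν i)]⟩
    rw [hmi_eq, ht, add_comm]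
    simp [Nat.coprime_add_mul_right_right]
  have hlam : (f i).lambda (m + ν i) = (f i).lambda (ν i) * (f i).lambda mi := by
    rw [hmi]; exact (f i).lambda_mul hcop
  set A : ℝ := |(f i).lambda mi| with hAdef
  have hA0 : 0 ≤ A := abs_nonneg _
  have habs : |(f i).lambda (m + ν i)| = L i * A := by rw [hlam, abs_mul]
  -- size facts
  have hνm' : ν i ≤ m := by
    calc ν i ≤ K := hνK
    _ ≤ 2 * K := Nat.le_mul_of_pos_left _ (by norm_num)
    _ ≤ (2 * K).factorial := Nat.self_le_factorial _
    _ ≤ m := Nat.le_of_dvd hm hdvd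
  have hmpos : (0:ℝ) < (m : ℝ) := by exact_mod_cast hm
  set M : ℝ := (m : ℝ) ^ (s i) with hMdef
  have hMpos : 0 < M := Real.rpow_pos_of_pos hmpos _
  set X : ℝ := ((m + ν i : ℕ) : ℝ) ^ (s i) with hXdef
  have hXpos : 0 < X := by
    have : (0:ℝ) < ((m + ν i : ℕ) : ℝ) := by
      exact_mod_cast Nat.add_pos_left hm _
    exact Real.rpow_pos_of_pos this _
  have hMX : M ≤ X := by
    apply Real.rpow_le_rpow hmpos.le _ (hs0 i)
    exact_mod_cast Nat.le_add_right m (ν i)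
  have hX2M : X ≤ W i * M := by
    have h2m : ((m + ν i : ℕ) : ℝ) ≤ 2 * (m : ℝ) := by
      push_cast
      have : (ν i : ℝ) ≤ (m : ℝ) := by exact_mod_cast hνm'
      linarith
    calc X ≤ (2 * (m:ℝ)) ^ (s i) := by
            apply Real.rpow_le_rpow (by positivity) h2m (hs0 i)
    _ = W i * M := by
            rw [hWdef, hMdef, Real.mul_rpow (by norm_num) hmpos.le]
  have hcoeff : |(f i).coeff (m + ν i)| / (m : ℝ) ^ ((((f i).weight : ℝ) - 1) / 2)
      = (L i * A) * (X / M) := by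
    have h1 : (f i).coeff (m + ν i) = (f i).lambda (m + ν i) * X := by
      rw [PrimitiveForm.lambda, hXdef]
      field_simp
      rfl
    rw [h1, abs_mul, abs_of_pos hXpos, habs]
    rw [hMdef]
    ring
  have hr1 : 1 ≤ X / M := (one_le_div hMpos).mpr hMX
  have hr2 : X / M ≤ W i := (div_le_iff₀ hMpos).mpr (by linarith [hX2M])
  have hLA0 : 0 ≤ L i * A := mul_nonneg (hLpos i).le hA0
  refine ⟨⟨?_, ?_⟩, ?_, ?_⟩
  · rw [habs]
    exact mul_le_mul_of_nonneg_right (hc₀L i) hA0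
  · rw [habs]
    exact mul_le_mul_of_nonneg_right (hc₀invL i) hA0
  · rw [hcoeff]
    calc c₀ * A ≤ L i * A := mul_le_mul_of_nonneg_right (hc₀L i) hA0
    _ ≤ (L i * A) * (X / M) := le_mul_of_one_le_right hLA0 hr1
  · rw [hcoeff]
    calc (L i * A) * (X / M) ≤ (L i * A) * W i :=
          mul_le_mul_of_nonneg_left hr2 hLA0
    _ = (L i * W i) * A := by ring
    _ ≤ c₀⁻¹ * A := mul_le_mul_of_nonneg_right (hc₀LW i) hA0
end
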